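/- Let r(t) = ∫_ℝ e^{−2πitλ} dρ(λ) for a finite positive measure ρ on ℝ with finite exponential moments, and define q(x,a,b) = |r(x+ia+ib)|²/(r(2ia)r(2ib)) for a,b in the allowed strip. Then q(x,a,b) ∈ [0,1] for all x, a, b, and if ρ is non-atomic and not degenerate, q(x,a,b) = 1 if and only if x = 0 and a = b. -/

import Mathlib

open MeasureTheory Real
open scoped Real ComplexConjugate

/-- `q(x,a,b) = |r(x+ia+ib)|² / (r(2ia) r(2ib))` where `r(z) = ∫ e^{-2πizλ} dρ(λ)`;
note `r(2iy) = ∫ e^{4πyλ} dρ(λ)`. -/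
noncomputable def qfun (ρ : Measure ℝ) (x a b : ℝ) : ℝ :=
  ‖∫ l, Complex.exp (-(2 * π : ℝ) * Complex.I * ((x : ℂ) + Complex.I * a + Complex.I * b) * (l : ℂ)) ∂ρ‖ ^ 2 /
    ((∫ l, Real.exp (4 * π * a * l) ∂ρ) * (∫ l, Real.exp (4 * π * b * l) ∂ρ))

/- Auxiliary lemmas -/

lemma expc_cont (w : ℂ) : Continuous fun l : ℝ => Complex.exp (w * l) :=
  Complex.continuous_exp.comp (continuous_const.mul Complex.continuous_ofReal)

lemma expc_norm (w : ℂ) (l : ℝ) : ‖Complex.exp (w * l)‖ = Real.exp (w.re * l) := by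
  rw [Complex.norm_exp]
  congr 1
  simp [Complex.mul_re]

lemma integ_exp_of (ρ : Measure ℝ) (c : ℝ)
    (h : Integrable (fun l : ℝ => Real.exp (|c| * |l|)) ρ) :
    Integrable (fun l : ℝ => Real.exp (c * l)) ρ := by
  refine h.mono' (Real.continuous_exp.comp (continuous_const.mul continuous_id)).aestronglyMeasurable
    (Filter.Eventually.of_forall fun l => ?_)
  rw [Real.norm_eq_abs, Real.abs_exp]
  exact Real.exp_le_exp.2 ((le_abs_self _).trans (le_of_eq (abs_mul c l)))

lemma memL2_exp (ρ : Measure ℝ) (w : ℂ)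
    (h : Integrable (fun l : ℝ => Real.exp (2 * w.re * l)) ρ) :
    MemLp (fun l : ℝ => Complex.exp (w * l)) 2 ρ := by
  rw [memLp_two_iff_integrable_sq_norm (expc_cont w).aestronglyMeasurable]
  refine h.congr (Filter.Eventually.of_forall fun l => ?_)
  show rexp (2 * w.re * l) = ‖Complex.exp (w * l)‖ ^ 2
  rw [expc_norm, sq, ← Real.exp_add]
  ring_nf

lemma inner_toLp_exp (ρ : Measure ℝ) (u v : ℂ)
    (hu : MemLp (fun l : ℝ => Complex.exp (u * l)) 2 ρ)
    (hv : MemLp (fun l : ℝ => Complex.exp (v * l)) 2 ρ) :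
    (inner ℂ (hu.toLp _) (hv.toLp _) : ℂ) = ∫ l, Complex.exp ((conj u + v) * l) ∂ρ := by
  rw [MeasureTheory.L2.inner_def]
  refine integral_congr_ae ?_
  filter_upwards [hu.coeFn_toLp, hv.coeFn_toLp] with l h1 h2
  rw [h1, h2, RCLike.inner_apply, ← Complex.exp_conj, map_mul, Complex.conj_ofReal,
    add_mul, Complex.exp_add, mul_comm]

lemma norm_toLp_exp_sq (ρ : Measure ℝ) (u : ℂ)
    (hu : MemLp (fun l : ℝ => Complex.exp (u * l)) 2 ρ) :
    ‖hu.toLp _‖ ^ 2 = ∫ l, Real.exp (2 * u.re * l) ∂ρ := by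
  have h1 : ∀ l : ℝ, Complex.exp ((conj u + u) * l) = ((Real.exp (2 * u.re * l) : ℝ) : ℂ) := by
    intro l
    rw [Complex.ofReal_exp]
    congr 1
    rw [add_comm, Complex.add_conj]
    push_cast
    ring
  have h2 : ∫ l, ((Real.exp (2 * u.re * l) : ℝ) : ℂ) ∂ρ = ((∫ l, Real.exp (2 * u.re * l) ∂ρ : ℝ) : ℂ) :=
    integral_ofReal
  rw [← inner_self_eq_norm_sq (𝕜 := ℂ), inner_toLp_exp ρ u u hu hu]
  simp_rw [h1]
  rw [h2]
  simp

lemma norm_toLp_f_sq (ρ : Measure ℝ) (x a : ℝ)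
    (hf : MemLp (fun l : ℝ => Complex.exp (((((2:ℝ)*π*a : ℝ) : ℂ) - (((2:ℝ)*π*x : ℝ) : ℂ) * Complex.I) * l)) 2 ρ) :
    ‖hf.toLp _‖ ^ 2 = ∫ l, Real.exp (4 * π * a * l) ∂ρ := by
  rw [norm_toLp_exp_sq]
  congr 1
  funext l
  have : ((((2:ℝ)*π*a : ℝ) : ℂ) - (((2:ℝ)*π*x : ℝ) : ℂ) * Complex.I).re = 2*π*a := by simp
  rw [this]
  ring_nf

lemma norm_toLp_g_sq (ρ : Measure ℝ) (b : ℝ)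
    (hg : MemLp (fun l : ℝ => Complex.exp ((((2:ℝ)*π*b : ℝ) : ℂ) * l)) 2 ρ) :
    ‖hg.toLp _‖ ^ 2 = ∫ l, Real.exp (4 * π * b * l) ∂ρ := by
  rw [norm_toLp_exp_sq]
  congr 1
  funext l
  have : ((((2:ℝ)*π*b : ℝ) : ℂ)).re = 2*π*b := by simp
  rw [this]
  ring_nf

lemma qfun_repr (ρ : Measure ℝ) [IsFiniteMeasure ρ] (x a b : ℝ)
    (hf : MemLp (fun l : ℝ => Complex.exp (((((2:ℝ)*π*a : ℝ) : ℂ) - (((2:ℝ)*π*x : ℝ) : ℂ) * Complex.I) * l)) 2 ρ)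
    (hg : MemLp (fun l : ℝ => Complex.exp ((((2:ℝ)*π*b : ℝ) : ℂ) * l)) 2 ρ) :
    qfun ρ x a b
      = ‖(inner ℂ (hg.toLp _) (hf.toLp _) : ℂ)‖ ^ 2 / (‖hf.toLp _‖ ^ 2 * ‖hg.toLp _‖ ^ 2) := by
  have hnum : ∫ l, Complex.exp (-(2 * π : ℝ) * Complex.I * ((x : ℂ) + Complex.I * a + Complex.I * b) * (l : ℂ)) ∂ρ
      = (inner ℂ (hg.toLp _) (hf.toLp _) : ℂ) := by
    rw [inner_toLp_exp]
    congr 1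
    funext l
    congr 1
    rw [Complex.conj_ofReal]
    push_cast
    linear_combination ((l:ℂ) * (-2*π*a - 2*π*b)) * Complex.I_sq
  rw [qfun, hnum, norm_toLp_f_sq ρ x a hf, norm_toLp_g_sq ρ b hg]

theorem stmt17 (Δ : ℝ) (hΔ : 0 < Δ) (ρ : Measure ℝ) [IsFiniteMeasure ρ]
    (hexp : ∀ y : ℝ, |y| < Δ → Integrable (fun l => Real.exp (4 * π * y * |l|)) ρ) :
    (∀ x a b : ℝ, |a| < Δ → |b| < Δ → qfun ρ x a b ∈ Set.Icc (0 : ℝ) 1) ∧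
      ((∀ l : ℝ, ρ {l} = 0) → ρ ≠ 0 →
        ∀ x a b : ℝ, |a| < Δ → |b| < Δ →
          (qfun ρ x a b = 1 ↔ x = 0 ∧ a = b)) := by
  have hint : ∀ c : ℝ, |c| < Δ → Integrable (fun l : ℝ => Real.exp (4*π*c*l)) ρ := by
    intro c hc
    have h1 := hexp |c| (by rwa [abs_abs])
    apply integ_exp_of
    have he : ∀ l : ℝ, abs (4*π*c) * abs l = 4*π*(abs c)*(abs l) := fun l => by
      rw [abs_mul, abs_of_nonneg (by positivity : (0:ℝ) ≤ 4*π)]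
    simp only [he]
    exact h1
  have hmemf : ∀ x a : ℝ, |a| < Δ →
      MemLp (fun l : ℝ => Complex.exp (((((2:ℝ)*π*a : ℝ) : ℂ) - (((2:ℝ)*π*x : ℝ) : ℂ) * Complex.I) * l)) 2 ρ := by
    intro x a ha
    apply memL2_exp
    have hre : ((((2:ℝ)*π*a : ℝ) : ℂ) - (((2:ℝ)*π*x : ℝ) : ℂ) * Complex.I).re = 2*π*a := by simp
    rw [hre]
    refine (hint a ha).congr (Filter.Eventually.of_forall fun l => ?_)
    ring_nf
  have hmemg : ∀ b : ℝ, |b| < Δ →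
      MemLp (fun l : ℝ => Complex.exp ((((2:ℝ)*π*b : ℝ) : ℂ) * l)) 2 ρ := by
    intro b hb
    apply memL2_exp
    have hre : ((((2:ℝ)*π*b : ℝ) : ℂ)).re = 2*π*b := by simp
    rw [hre]
    refine (hint b hb).congr (Filter.Eventually.of_forall fun l => ?_)
    ring_nf
  constructor
  · intro x a b ha hb
    rw [qfun_repr ρ x a b (hmemf x a ha) (hmemg b hb)]
    constructor
    · positivity
    · apply div_le_one_of_le₀
      · calc ‖(inner ℂ ((hmemg b hb).toLp _) ((hmemf x a ha).toLp _) : ℂ)‖ ^ 2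
              ≤ (‖(hmemg b hb).toLp _‖ * ‖(hmemf x a ha).toLp _‖) ^ 2 :=
            pow_le_pow_left₀ (norm_nonneg _) (norm_inner_le_norm _ _) 2
          _ = ‖(hmemf x a ha).toLp _‖ ^ 2 * ‖(hmemg b hb).toLp _‖ ^ 2 := by ring
      · positivity
  · intro hatom hne x a b ha hb
    haveI : NullSingletonClass ρ := ⟨hatom⟩
    haveI : NeZero ρ := ⟨hne⟩
    have hpos : ∀ c : ℝ, |c| < Δ → 0 < ∫ l, Real.exp (4*π*c*l) ∂ρ :=
      fun c hc => integral_exp_pos (hint c hc)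
    constructor
    · -- forward
      intro h1
      by_contra hcon
      set F := (hmemf x a ha).toLp _ with hF
      set G := (hmemg b hb).toLp _ with hG
      have hFsq : ‖F‖ ^ 2 = ∫ l, Real.exp (4*π*a*l) ∂ρ := norm_toLp_f_sq ρ x a _
      have hGsq : ‖G‖ ^ 2 = ∫ l, Real.exp (4*π*b*l) ∂ρ := norm_toLp_g_sq ρ b _
      have hF0 : F ≠ 0 := by
        intro h0
        rw [h0] at hFsq
        simp only [norm_zero] at hFsq
        have := hpos a ha
        rw [← hFsq] at this
        simp at this
      have hG0 : G ≠ 0 := by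
        intro h0
        rw [h0] at hGsq
        simp only [norm_zero] at hGsq
        have := hpos b hb
        rw [← hGsq] at this
        simp at this
      have hdpos : 0 < ‖F‖ ^ 2 * ‖G‖ ^ 2 := by
        have := norm_pos_iff.2 hF0
        have := norm_pos_iff.2 hG0
        positivity
      rw [qfun_repr ρ x a b (hmemf x a ha) (hmemg b hb)] at h1
      have heq : ‖(inner (𝕜 := ℂ) G F)‖ ^ 2 = ‖F‖ ^ 2 * ‖G‖ ^ 2 :=
        (div_eq_one_iff_eq hdpos.ne').1 h1
      have heq' : ‖(inner (𝕜 := ℂ) G F)‖ = ‖G‖ * ‖F‖ := by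
        have h2 : ‖(inner (𝕜 := ℂ) G F)‖ ^ 2 = (‖G‖ * ‖F‖) ^ 2 := by rw [heq]; ring
        have h3 := congrArg Real.sqrt h2
        rwa [Real.sqrt_sq (norm_nonneg _), Real.sqrt_sq (by positivity)] at h3
      obtain ⟨r, hr0, hFr⟩ := (norm_inner_eq_norm_iff hG0 hF0).1 heq'
      -- a.e. equality of functions
      have hae : ∀ᵐ l : ℝ ∂ρ, Complex.exp ((((((2:ℝ)*π*a : ℝ) : ℂ) - (((2:ℝ)*π*x : ℝ) : ℂ) * Complex.I) - (((2:ℝ)*π*b : ℝ) : ℂ)) * (l:ℝ)) = r := by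
        have e1 := (hmemf x a ha).coeFn_toLp
        have e2 := (hmemg b hb).coeFn_toLp
        have e3 : ⇑F =ᵐ[ρ] fun l => r • (⇑G) l := by
          rw [hFr]
          exact Lp.coeFn_smul r G
        filter_upwards [e1, e2, e3] with l p1 p2 p3
        rw [sub_mul, Complex.exp_sub]
        rw [show Complex.exp (((((2:ℝ)*π*a : ℝ) : ℂ) - (((2:ℝ)*π*x : ℝ) : ℂ) * Complex.I) * l) = F l from p1.symm]
        rw [p3]
        simp only [smul_eq_mul]
        rw [show (⇑G) l = Complex.exp ((((2:ℝ)*π*b : ℝ) : ℂ) * l) from p2]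
        rw [mul_div_assoc, div_self (Complex.exp_ne_zero _), mul_one]
      set c : ℂ := ((((2:ℝ)*π*a : ℝ) : ℂ) - (((2:ℝ)*π*x : ℝ) : ℂ) * Complex.I) - (((2:ℝ)*π*b : ℝ) : ℂ) with hc
      set S : Set ℝ := {l : ℝ | Complex.exp (c * l) = r} with hS
      have hSc : S.Countable := by
        rcases eq_or_ne a b with hab | hab
        · -- then x ≠ 0, c purely imaginary
          have hx : x ≠ 0 := fun h0 => hcon ⟨h0, hab⟩
          have hcim : c.im = -(2*π*x) := by simp [hc]
          have h2pi : (0:ℝ) < 2*π := by positivity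
          have hcim0 : c.im ≠ 0 := by
            rw [hcim]
            intro h
            apply hx
            have h2 : 2*π*x = 0 := by linarith
            rcases mul_eq_zero.1 h2 with h3 | h3
            · exact absurd h3 (ne_of_gt h2pi)
            · exact h3
          rcases Set.eq_empty_or_nonempty S with hSe | ⟨l0, hl0⟩
          · simp [hSe]
          · have hsub : S ⊆ Set.range (fun n : ℤ => l0 + (n : ℝ) * (2*π) / c.im) := by
              intro l hl
              have hl' : Complex.exp (c * l) = r := hl
              have hl0' : Complex.exp (c * l0) = r := hl0
              have h4 : Complex.exp (c * l - c * l0) = 1 := by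
                rw [Complex.exp_sub, hl', hl0', div_self hr0]
              obtain ⟨n, hn⟩ := Complex.exp_eq_one_iff.1 h4
              refine ⟨n, ?_⟩
              have him : c.im * l - c.im * l0 = n * (2*π) := by
                have h7 := congrArg Complex.im hn
                simpa [Complex.sub_im, Complex.mul_im, Complex.mul_re, Complex.I_im, Complex.I_re,
                  Complex.ofReal_re, Complex.ofReal_im, Complex.intCast_re, Complex.intCast_im] using h7
              have him' : (n:ℝ) * (2*π) = c.im * (l - l0) := by linarith
              have h8 : l0 + (c.im * (l - l0)) / c.im = l := by
                rw [mul_div_cancel_left₀ _ hcim0]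
                ring
              show l0 + (n:ℝ) * (2*π) / c.im = l
              rw [him']
              exact h8
            exact (Set.countable_range _).mono hsub
        · -- a ≠ b : c.re ≠ 0
          have hcre : c.re = 2*π*a - 2*π*b := by simp [hc]
          have h2pi : (0:ℝ) < 2*π := by positivity
          have hcre0 : c.re ≠ 0 := by
            rw [hcre]
            intro h
            apply hab
            have h2 : 2*π*(a-b) = 0 := by linarith
            rcases mul_eq_zero.1 h2 with h3 | h3
            · exact absurd h3 (ne_of_gt h2pi)
            · exact sub_eq_zero.1 h3
          apply Set.Subsingleton.countable
          intro l1 h1' l2 h2'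
          have h1'' : Complex.exp (c * l1) = r := h1'
          have h2'' : Complex.exp (c * l2) = r := h2'
          have e12 : Complex.exp (c * l1) = Complex.exp (c * l2) := by
            rw [h1'', h2'']
          have := congrArg norm e12
          rw [expc_norm, expc_norm] at this
          have := Real.exp_eq_exp.1 this
          exact mul_left_cancel₀ hcre0 this
      have hnull : ρ S = 0 := hSc.measure_zero ρ
      have hcompl : ρ Sᶜ = 0 := by
        rw [hS, Set.compl_setOf]
        exact ae_iff.1 hae
      have : ρ Set.univ = 0 := by
        have h6 := measure_union_le (μ := ρ) S Sᶜ
        rw [Set.union_compl_self, hnull, hcompl] at h6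
        simpa using h6
      exact hne (Measure.measure_univ_eq_zero.1 this)
    · -- reverse
      rintro ⟨rfl, rfl⟩
      have hintg : ∀ l : ℝ, Complex.exp (-(2 * π : ℝ) * Complex.I * (((0:ℝ) : ℂ) + Complex.I * a + Complex.I * a) * (l : ℂ))
          = ((Real.exp (4*π*a*l) : ℝ) : ℂ) := by
        intro l
        have harg : (-(2 * π : ℝ) * Complex.I * (((0:ℝ) : ℂ) + Complex.I * a + Complex.I * a) * (l : ℂ)) = ((4*π*a*l : ℝ) : ℂ) := by
          push_cast
          linear_combination (-(4*π*a*(l:ℂ))) * Complex.I_sq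
        rw [harg, Complex.ofReal_exp]
      rw [qfun]
      simp_rw [hintg]
      have h2 : ∫ l, ((Real.exp (4*π*a*l) : ℝ) : ℂ) ∂ρ = ((∫ l, Real.exp (4*π*a*l) ∂ρ : ℝ) : ℂ) :=
        integral_ofReal
      rw [h2]
      have hp := hpos a ha
      rw [Complex.norm_real, Real.norm_eq_abs, abs_of_pos hp, sq]
      exact div_self (by positivity)
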